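/- arXiv:2403.05542 — 3 statements merged into one kernel-verified Lean document; each statement's English description precedes it below -/
import Mathlib

section
/- For the two-robot protocol SIM-2^RS_A viewed as a deterministic color-update rule on pairs from {T, M, S}: from configuration (M, T), under any semi-synchronous activation schedule where in each round a nonempty subset of the two robots is activated, the sequence of configurations follows the 6-cycle (M,T)→(S,T)→(S,M)→(T,M)→(T,S)→(M,S)→(M,T), where each arrow may take one or more rounds but the order of configurations never deviates. -/
inductive C3 : Type
  | T | M | S
  deriving DecidableEq

open C3

/-- The color update rule of SIM-2^RS_A for an activated robot: own color,
other's color ↦ new color. A T-robot seeing T or S becomes M (and executes P);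
an M-robot seeing T or M becomes S; an S-robot seeing M or S becomes T;
otherwise the color is unchanged. -/
def upd : C3 → C3 → C3
  | C3.T, C3.T => C3.M
  | C3.T, C3.S => C3.M
  | C3.M, C3.T => C3.S
  | C3.M, C3.M => C3.S
  | C3.S, C3.M => C3.T
  | C3.S, C3.S => C3.T
  | c, _ => c

abbrev Cfg := C3 × C3

/-- One semi-synchronous roundStep: each activated robot observes the pre-roundStep
configuration and all activated robots update simultaneously. -/
def roundStep (act : Bool × Bool) (c : Cfg) : Cfg :=
  (if act.1 then upd c.1 c.2 else c.1, if act.2 then upd c.2 c.1 else c.2)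

/-- Robot `a` executes P in a roundStep iff it is activated, has color T and the
other robot's color is T or S. -/
def execA (act : Bool × Bool) (c : Cfg) : Prop :=
  act.1 = true ∧ c.1 = C3.T ∧ (c.2 = C3.T ∨ c.2 = C3.S)

/-- Robot `b` executes P in a roundStep iff it is activated, has color T and the
other robot's color is T or S. -/
def execB (act : Bool × Bool) (c : Cfg) : Prop :=
  act.2 = true ∧ c.2 = C3.T ∧ (c.1 = C3.T ∨ c.1 = C3.S)

/-- The 6-cycle (M,T)→(S,T)→(S,M)→(T,M)→(T,S)→(M,S)→(M,T). -/
def next6 : Cfg → Cfg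
  | (C3.M, C3.T) => (C3.S, C3.T)
  | (C3.S, C3.T) => (C3.S, C3.M)
  | (C3.S, C3.M) => (C3.T, C3.M)
  | (C3.T, C3.M) => (C3.T, C3.S)
  | (C3.T, C3.S) => (C3.M, C3.S)
  | (C3.M, C3.S) => (C3.M, C3.T)
  | c => c

instance : Fintype C3 :=
  ⟨{C3.T, C3.M, C3.S}, by intro x; cases x <;> simp⟩

def InCyc (x : Cfg) : Prop :=
  x = (C3.M, C3.T) ∨ x = (C3.S, C3.T) ∨ x = (C3.S, C3.M) ∨
  x = (C3.T, C3.M) ∨ x = (C3.T, C3.S) ∨ x = (C3.M, C3.S)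

instance : DecidablePred InCyc := fun x => by unfold InCyc; infer_instance

lemma key : ∀ (a : Bool × Bool) (x : Cfg), InCyc x →
    (roundStep a x = x ∨ roundStep a x = next6 x) ∧ InCyc (roundStep a x) ∧
    next6 x ≠ x := by decide

lemma enabled : ∀ x : Cfg, InCyc x →
    (upd x.1 x.2 ≠ x.1) ∨ (upd x.2 x.1 ≠ x.2) := by decide

/-- from configuration (M,T), under any fair semi-synchronous
activation schedule with nonempty activation sets, the configuration sequence
of SIM-2^RS_A follows the 6-cycle: each roundStep either keeps the configuration
or advances it one step along the cycle, and it advances infinitely often. -/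
theorem sim2_follows_six_cycle (act : ℕ → Bool × Bool)
    (hne : ∀ n, act n ≠ (false, false))
    (hfa : ∀ N, ∃ n ≥ N, (act n).1 = true)
    (hfb : ∀ N, ∃ n ≥ N, (act n).2 = true)
    (c : ℕ → Cfg) (h0 : c 0 = (C3.M, C3.T))
    (hstep : ∀ n, c (n + 1) = roundStep (act n) (c n)) :
    (∀ n, c (n + 1) = c n ∨ c (n + 1) = next6 (c n)) ∧
    (∀ N, ∃ n ≥ N, c (n + 1) = next6 (c n) ∧ c (n + 1) ≠ c n) := by
  have hinv : ∀ n, InCyc (c n) := by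
    intro n
    induction n with
    | zero => rw [h0]; left; rfl
    | succ n ih => rw [hstep n]; exact ((key (act n) (c n) ih).2).1
  have part1 : ∀ n, c (n + 1) = c n ∨ c (n + 1) = next6 (c n) := by
    intro n; rw [hstep n]; exact (key (act n) (c n) (hinv n)).1
  refine ⟨part1, ?_⟩
  intro N
  by_contra h
  push_neg at h
  have hconst : ∀ n ≥ N, c n = c N := by
    intro n hn
    induction n with
    | zero => have : N = 0 := by omega
              rw [this]
    | succ n ih =>
      rcases Nat.lt_or_ge N (n+1) with h1 | h1
      · have hn' : n ≥ N := by omega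
        have hcn := ih hn'
        rcases part1 n with he | he
        · rw [he, hcn]
        · exfalso
          have hne' : c (n+1) ≠ c n := by
            rw [he]; exact (key (act n) (c n) (hinv n)).2.2
          exact hne' (h n hn' he)
      · have : N = n + 1 := by omega
        rw [this]
  rcases enabled (c N) (hinv N) with hA | hB
  · obtain ⟨n, hn, ha⟩ := hfa N
    have h1 : c n = c N := hconst n hn
    have h2 : c (n+1) = c N := hconst (n+1) (by omega)
    have := hstep n
    rw [h1, h2] at this
    apply hA
    have : (roundStep (act n) (c N)).1 = (c N).1 := by rw [← this]
    simpa [roundStep, ha] using this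
  · obtain ⟨n, hn, hb⟩ := hfb N
    have h1 : c n = c N := hconst n hn
    have h2 : c (n+1) = c N := hconst (n+1) (by omega)
    have := hstep n
    rw [h1, h2] at this
    apply hB
    have : (roundStep (act n) (c N)).2 = (c N).2 := by rw [← this]
    simpa [roundStep, hb] using this
end

section
/- In the 6-cycle (M,T)→(S,T)→(S,M)→(T,M)→(T,S)→(M,S)→(M,T) of SIM-2^RS_A under SSYNCH, robot b executes P exactly at the transition (S,T)→(S,M) and robot a executes P exactly at the transition (T,S)→(M,S); hence in each traversal of the cycle each robot executes P exactly once and the two executions alternate, so the induced schedule satisfies the RSYNCH disjointness condition e_i ∩ e_{i+1} = ∅. -/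
open C3

instance (a : Bool × Bool) (x : Cfg) : Decidable (execA a x) := by
  unfold execA; infer_instance
instance (a : Bool × Bool) (x : Cfg) : Decidable (execB a x) := by
  unfold execB; infer_instance

def SA (x : Cfg) : Prop := x = (C3.M, C3.S) ∨ x = (C3.M, C3.T) ∨ x = (C3.S, C3.T)
def SB (x : Cfg) : Prop := x = (C3.S, C3.M) ∨ x = (C3.T, C3.M) ∨ x = (C3.T, C3.S)

instance (x : Cfg) : Decidable (SA x) := by unfold SA; infer_instance
instance (x : Cfg) : Decidable (SB x) := by unfold SB; infer_instance

lemma inv_step : ∀ (a : Bool × Bool) (x : Cfg), x.1 ≠ x.2 →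
    (roundStep a x).1 ≠ (roundStep a x).2 := by decide

lemma SA_step : ∀ (a : Bool × Bool) (x : Cfg), SA x → ¬ execB a x →
    SA (roundStep a x) := by decide

lemma SB_step : ∀ (a : Bool × Bool) (x : Cfg), SB x → ¬ execA a x →
    SB (roundStep a x) := by decide
/-- along the 6-cycle of SIM-2^RS_A started at (M,T) under a
fair semi-synchronous schedule, robot b executes P exactly at the transition
(S,T)→(S,M) and robot a exactly at (T,S)→(M,S); consequently the two robots'
executions of P strictly alternate (so the induced schedule satisfies the
RSYNCH disjointness condition). -/
theorem sim2_six_cycle_alternation (act : ℕ → Bool × Bool)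
    (hne : ∀ n, act n ≠ (false, false))
    (hfa : ∀ N, ∃ n ≥ N, (act n).1 = true)
    (hfb : ∀ N, ∃ n ≥ N, (act n).2 = true)
    (c : ℕ → Cfg) (h0 : c 0 = (C3.M, C3.T))
    (hstep : ∀ n, c (n + 1) = roundStep (act n) (c n)) :
    (∀ n, execA (act n) (c n) ↔
      (c n = (C3.T, C3.S) ∧ c (n + 1) = (C3.M, C3.S))) ∧
    (∀ n, execB (act n) (c n) ↔
      (c n = (C3.S, C3.T) ∧ c (n + 1) = (C3.S, C3.M))) ∧
    (∀ m n, m < n → execA (act m) (c m) → execA (act n) (c n) →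
      (∀ k, m < k → k < n → ¬ execA (act k) (c k)) →
      ∃ k, m < k ∧ k < n ∧ execB (act k) (c k)) ∧
    (∀ m n, m < n → execB (act m) (c m) → execB (act n) (c n) →
      (∀ k, m < k → k < n → ¬ execB (act k) (c k)) →
      ∃ k, m < k ∧ k < n ∧ execA (act k) (c k)) := by
  have hinv : ∀ n, (c n).1 ≠ (c n).2 := by
    intro n
    induction n with
    | zero => rw [h0]; decide
    | succ k ih => rw [hstep k]; exact inv_step _ _ ih
  have hA : ∀ n, execA (act n) (c n) ↔
      (c n = (C3.T, C3.S) ∧ c (n + 1) = (C3.M, C3.S)) := by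
    intro n
    have h := hinv n
    rw [hstep n]
    revert h
    rcases act n with ⟨a1, a2⟩
    rcases c n with ⟨x, y⟩
    revert a1 a2 x y
    decide
  have hB : ∀ n, execB (act n) (c n) ↔
      (c n = (C3.S, C3.T) ∧ c (n + 1) = (C3.S, C3.M)) := by
    intro n
    have h := hinv n
    rw [hstep n]
    revert h
    rcases act n with ⟨a1, a2⟩
    rcases c n with ⟨x, y⟩
    revert a1 a2 x y
    decide
  refine ⟨hA, hB, ?_, ?_⟩
  · intro m n hmn hm hn _
    by_contra hcon
    push_neg at hcon
    have key : ∀ j, m + 1 ≤ j → j ≤ n → SA (c j) := by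
      intro j
      induction j with
      | zero => intro h; omega
      | succ k ih =>
        intro h1 h2
        rcases Nat.lt_or_ge (m + 1) (k + 1) with hlt | hge
        · have hkS : SA (c k) := ih (by omega) (by omega)
          have hnoB : ¬ execB (act k) (c k) := by
            intro hb
            exact absurd hb (hcon k (by omega) (by omega))
          rw [hstep k]
          exact SA_step _ _ hkS hnoB
        · have hk : k = m := by omega
          rw [hk, ((hA m).mp hm).2]
          left; rfl
    have hSA := key n (by omega) le_rfl
    rw [((hA n).mp hn).1] at hSA
    rcases hSA with h | h | h <;> simp_all
  · intro m n hmn hm hn _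
    by_contra hcon
    push_neg at hcon
    have key : ∀ j, m + 1 ≤ j → j ≤ n → SB (c j) := by
      intro j
      induction j with
      | zero => intro h; omega
      | succ k ih =>
        intro h1 h2
        rcases Nat.lt_or_ge (m + 1) (k + 1) with hlt | hge
        · have hkS : SB (c k) := ih (by omega) (by omega)
          have hnoA : ¬ execA (act k) (c k) := by
            intro ha
            exact absurd ha (hcon k (by omega) (by omega))
          rw [hstep k]
          exact SB_step _ _ hkS hnoA
        · have hk : k = m := by omega
          rw [hk, ((hB m).mp hm).2]
          left; rfl
    have hSB := key n (by omega) le_rfl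
    rw [((hB n).mp hn).1] at hSB
    rcases hSB with h | h | h <;> simp_all
end

section
/- Two-color impossibility (finite case analysis): for two robots each with a light of 2 colors {X, Y}, for every protocol of the form 'when my color is α and the other's color is β, perform action A_{αβ} ∈ {execute P, no action} and set my color to C_{αβ} ∈ {X, Y}', there exists a semi-synchronous fair activation schedule under which the induced sequence of P-execution sets violates the RSYNCH restricted-repetition condition (i.e., either some robot never executes P — violating fairness — or some robot executes P in two consecutive P-execution events without the other robot executing P in between, while a full simultaneous execution pattern is also not maintained). -/
inductive C2 : Type
  | X | Y
  deriving DecidableEq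

/-- A candidate two-color simulation protocol: for (own color, other's color)
it returns (whether to execute P, the new own color). There are 2^8 = 256
such protocols. -/
abbrev Proto := C2 → C2 → Bool × C2

/-- One semi-synchronous round of a protocol: each activated robot observes
the pre-round configuration, performs its action and sets its color. -/
def step (π : Proto) (act : Bool × Bool) (c : C2 × C2) : C2 × C2 :=
  (if act.1 then (π c.1 c.2).2 else c.1,
   if act.2 then (π c.2 c.1).2 else c.2)

/-- The pair of robots executing P in a round. -/
def execSet (π : Proto) (act : Bool × Bool) (c : C2 × C2) : Bool × Bool :=
  (act.1 && (π c.1 c.2).1, act.2 && (π c.2 c.1).1)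

/-- A fair semi-synchronous activation schedule: every round activates a
nonempty set and each robot is activated infinitely often. -/
def FairSched (act : ℕ → Bool × Bool) : Prop :=
  (∀ n, act n ≠ (false, false)) ∧
  (∀ N, ∃ n ≥ N, (act n).1 = true) ∧ (∀ N, ∃ n ≥ N, (act n).2 = true)

/-- The restricted-repetition (RSYNCH) condition on a sequence of nonempty
robot sets (encoded as Boolean pairs), together with fairness: either all
sets are the full set {a,b}, or after a finite fully-synchronous prefix all
sets are singletons with consecutive sets disjoint; and each robot executes
infinitely often. -/
def RSynchPairs (g : ℕ → Bool × Bool) : Prop :=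
  ((∀ i, g i = (true, true)) ∨
    ∃ p : ℕ, (∀ i < p, g i = (true, true)) ∧
      ∀ i, p ≤ i →
        (g i = (true, false) ∨ g i = (false, true)) ∧
        ¬((g i).1 = true ∧ (g (i + 1)).1 = true) ∧
        ¬((g i).2 = true ∧ (g (i + 1)).2 = true)) ∧
  (∀ N, ∃ n ≥ N, (g n).1 = true) ∧ (∀ N, ∃ n ≥ N, (g n).2 = true)

/-- The induced P-execution schedule (the subsequence of rounds in which some
robot executes P) satisfies RSYNCH. -/
def InducedRSynch (π : Proto) (act : ℕ → Bool × Bool) (c : ℕ → C2 × C2) :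
    Prop :=
  ∃ f : ℕ → ℕ, StrictMono f ∧
    (∀ n, execSet π (act (f n)) (c (f n)) ≠ (false, false)) ∧
    (∀ m, execSet π (act m) (c m) ≠ (false, false) → ∃ n, f n = m) ∧
    RSynchPairs (fun n => execSet π (act (f n)) (c (f n)))

/-! ### Auxiliary machinery -/

instance : Fintype C2 := ⟨{C2.X, C2.Y}, fun x => by cases x <;> simp⟩

/-- Activation schedule from a finite prefix, followed by "both" forever. -/
def actOf (L : List (Bool × Bool)) (n : ℕ) : Bool × Bool := L.getD n (true, true)

/-- The deterministic configuration sequence from (X,X). -/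
def run (π : Proto) (act : ℕ → Bool × Bool) : ℕ → C2 × C2
  | 0 => (C2.X, C2.X)
  | n + 1 => step π (act n) (run π act n)

/-- The execution set at round `n` under the schedule `actOf L`. -/
def execAt (π : Proto) (L : List (Bool × Bool)) (n : ℕ) : Bool × Bool :=
  execSet π (actOf L n) (run π (actOf L) n)

/-- Certificate: the protocol never executes. -/
def K0 (π : Proto) : Bool :=
  decide (∀ α β, (π α β).1 = false)

/-- Certificate: after the prefix the configuration is an execution-free
fixed point of the fully synchronous step. -/
def K1 (π : Proto) (L : List (Bool × Bool)) : Bool :=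
  decide (step π (true, true) (run π (actOf L) L.length) = run π (actOf L) L.length) &&
  decide (execSet π (true, true) (run π (actOf L) L.length) = (false, false))

/-- Certificate: two consecutive execution events by the same robot. -/
def K2 (π : Proto) (L : List (Bool × Bool)) (r1 r2 : ℕ) : Bool :=
  (decide (execAt π L r1 = (true, false)) && (execAt π L r2).1 ||
   decide (execAt π L r1 = (false, true)) && (execAt π L r2).2) &&
  (List.range (r2 - r1 - 1)).all (fun k => decide (execAt π L (r1 + 1 + k) = (false, false)))

/-- Certificate: a singleton execution event followed by a full one. -/
def K4 (π : Proto) (L : List (Bool × Bool)) (r1 r2 : ℕ) : Bool :=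
  (decide (execAt π L r1 = (true, false)) || decide (execAt π L r1 = (false, true))) &&
  decide (execAt π L r2 = (true, true))

def certify (π : Proto) (L : List (Bool × Bool)) : Bool :=
  L.all (fun x => decide (x ≠ (false, false))) &&
  (K0 π || K1 π L ||
   (List.range L.length).any (fun r2 =>
     (List.range r2).any (fun r1 => K2 π L r1 r2 || K4 π L r1 r2)))

def plans : List (List (Bool × Bool)) :=
  [[(true,false),(true,false),(true,false),(true,false),(true,false)],
   [(true,false),(false,true),(false,true),(false,true),(false,true),(false,true)],
   [(true,false),(false,true)],
   [(true,false),(false,true),(true,true),(true,true)],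
   [(true,true),(true,false),(true,false)],
   [(true,true),(true,false)],
   [(true,true),(true,false),(false,true),(true,true),(true,false)],
   []]

set_option maxRecDepth 100000 in
theorem coverage : ∀ π : Proto, plans.any (certify π) = true := by decide

lemma run_spec (π : Proto) (act : ℕ → Bool × Bool) (c : ℕ → C2 × C2)
    (h0 : c 0 = (C2.X, C2.X)) (hs : ∀ n, c (n + 1) = step π (act n) (c n)) :
    ∀ n, c n = run π act n := by
  intro n
  induction n with
  | zero => simpa [run] using h0
  | succ n ih => rw [hs, ih]; rfl

lemma actOf_ge (L : List (Bool × Bool)) (n : ℕ) (h : L.length ≤ n) :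
    actOf L n = (true, true) := List.getD_eq_default L _ h

lemma fair_actOf (L : List (Bool × Bool)) (hL : ∀ x ∈ L, x ≠ (false, false)) :
    FairSched (actOf L) := by
  refine ⟨fun n => ?_, fun N => ⟨N + L.length, Nat.le_add_right _ _, ?_⟩,
    fun N => ⟨N + L.length, Nat.le_add_right _ _, ?_⟩⟩
  · by_cases h : n < L.length
    · rw [actOf, List.getD_eq_getElem L _ h]
      exact hL _ (List.getElem_mem h)
    · rw [actOf_ge L n (le_of_not_gt h)]; simp
  · rw [actOf_ge L _ (Nat.le_add_left _ _)]
  · rw [actOf_ge L _ (Nat.le_add_left _ _)]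

/-- If there are no execution events from round `M` on, RSYNCH fails. -/
lemma not_induced_silent (π : Proto) (act : ℕ → Bool × Bool) (c : ℕ → C2 × C2) (M : ℕ)
    (h : ∀ m, M ≤ m → execSet π (act m) (c m) = (false, false)) :
    ¬ InducedRSynch π act c := by
  rintro ⟨f, hf, hne, -, -⟩
  exact hne M (h (f M) hf.le_apply)

/-- Two consecutive execution events sharing a robot, the first a singleton:
RSYNCH fails. -/
lemma not_induced_K2 (π : Proto) (act : ℕ → Bool × Bool) (c : ℕ → C2 × C2) (r1 r2 : ℕ)
    (h12 : r1 < r2)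
    (hsh : (execSet π (act r1) (c r1) = (true, false) ∧
              (execSet π (act r2) (c r2)).1 = true) ∨
           (execSet π (act r1) (c r1) = (false, true) ∧
              (execSet π (act r2) (c r2)).2 = true))
    (hbet : ∀ m, r1 < m → m < r2 → execSet π (act m) (c m) = (false, false)) :
    ¬ InducedRSynch π act c := by
  rintro ⟨f, hf, hne, hsurj, hG, -, -⟩
  have h1ne : execSet π (act r1) (c r1) ≠ (false, false) := by
    rcases hsh with ⟨h, -⟩ | ⟨h, -⟩ <;> simp [h]
  have h2ne : execSet π (act r2) (c r2) ≠ (false, false) := by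
    rcases hsh with ⟨-, h⟩ | ⟨-, h⟩ <;> (intro hc; rw [hc] at h; simp at h)
  obtain ⟨i, hi⟩ := hsurj r1 h1ne
  obtain ⟨j, hj⟩ := hsurj r2 h2ne
  have hij : i < j := hf.lt_iff_lt.mp (by rw [hi, hj]; exact h12)
  have hfi1 : f (i + 1) = r2 := by
    have ha : r1 < f (i + 1) := hi ▸ hf (Nat.lt_succ_self i)
    have hb : f (i + 1) ≤ r2 := hj ▸ hf.monotone (Nat.succ_le_of_lt hij)
    rcases lt_or_eq_of_le hb with hlt | heq
    · exact absurd (hbet _ ha hlt) (hne (i + 1))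
    · exact heq
  rcases hG with hall | ⟨p, hpre, htail⟩
  · have h := hall i
    simp only [] at h
    rw [hi] at h
    rcases hsh with ⟨h1, -⟩ | ⟨h1, -⟩ <;> (rw [h1] at h; simp at h)
  · rcases Nat.lt_or_ge i p with hip | hpi
    · have h := hpre i hip
      simp only [] at h
      rw [hi] at h
      rcases hsh with ⟨h1, -⟩ | ⟨h1, -⟩ <;> (rw [h1] at h; simp at h)
    · have ht := htail i hpi
      rcases hsh with ⟨h1, h2⟩ | ⟨h1, h2⟩
      · exact ht.2.1 ⟨by simp only []; rw [hi, h1], by simp only []; rw [hfi1]; exact h2⟩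
      · exact ht.2.2 ⟨by simp only []; rw [hi, h1], by simp only []; rw [hfi1]; exact h2⟩

/-- A singleton execution event followed (later) by a full one: RSYNCH fails. -/
lemma not_induced_K4 (π : Proto) (act : ℕ → Bool × Bool) (c : ℕ → C2 × C2) (r1 r2 : ℕ)
    (h12 : r1 < r2)
    (h1 : execSet π (act r1) (c r1) = (true, false) ∨
          execSet π (act r1) (c r1) = (false, true))
    (h2 : execSet π (act r2) (c r2) = (true, true)) :
    ¬ InducedRSynch π act c := by
  rintro ⟨f, hf, hne, hsurj, hG, -, -⟩
  have h1ne : execSet π (act r1) (c r1) ≠ (false, false) := by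
    rcases h1 with h | h <;> simp [h]
  have h2ne : execSet π (act r2) (c r2) ≠ (false, false) := by simp [h2]
  obtain ⟨i, hi⟩ := hsurj r1 h1ne
  obtain ⟨j, hj⟩ := hsurj r2 h2ne
  have hij : i < j := hf.lt_iff_lt.mp (by rw [hi, hj]; exact h12)
  rcases hG with hall | ⟨p, hpre, htail⟩
  · have h := hall i
    simp only [] at h
    rw [hi] at h
    rcases h1 with h1 | h1 <;> (rw [h1] at h; simp at h)
  · rcases Nat.lt_or_ge i p with hip | hpi
    · have h := hpre i hip
      simp only [] at h
      rw [hi] at h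
      rcases h1 with h1 | h1 <;> (rw [h1] at h; simp at h)
    · have ht := (htail j (le_trans hpi (Nat.le_of_lt hij))).1
      simp only [] at ht
      rw [hj, h2] at ht
      rcases ht with ht | ht <;> simp at ht

lemma certify_sound (π : Proto) (L : List (Bool × Bool)) (h : certify π L = true) :
    ∃ act : ℕ → Bool × Bool, FairSched act ∧
      ∀ c : ℕ → C2 × C2, c 0 = (C2.X, C2.X) →
        (∀ n, c (n + 1) = step π (act n) (c n)) →
        ¬ InducedRSynch π act c := by
  simp only [certify, Bool.and_eq_true, Bool.or_eq_true, List.all_eq_true,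
    decide_eq_true_eq] at h
  obtain ⟨hnon, hcert⟩ := h
  refine ⟨actOf L, fair_actOf L hnon, ?_⟩
  intro c h0 hs
  have hc : ∀ n, c n = run π (actOf L) n := run_spec π (actOf L) c h0 hs
  have hE : ∀ m, execSet π (actOf L m) (c m) = execAt π L m := by
    intro m; rw [hc m]; rfl
  rcases hcert with (hK0 | hK1) | hany
  · -- never executes at all
    have hK0' := of_decide_eq_true hK0
    refine not_induced_silent π _ c 0 (fun m _ => ?_)
    simp [execSet, hK0' (c m).1 (c m).2, hK0' (c m).2 (c m).1]
  · -- execution-free fixed point after the prefix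
    simp only [K1, Bool.and_eq_true, decide_eq_true_eq] at hK1
    obtain ⟨hfix, hqe⟩ := hK1
    have hrun : ∀ k, run π (actOf L) (L.length + k) = run π (actOf L) L.length := by
      intro k
      induction k with
      | zero => rfl
      | succ k ih =>
        show step π (actOf L (L.length + k)) (run π (actOf L) (L.length + k)) = _
        rw [ih, actOf_ge L _ (Nat.le_add_right _ _), hfix]
    refine not_induced_silent π _ c L.length (fun m hm => ?_)
    have hr : run π (actOf L) m = run π (actOf L) L.length := by
      have := hrun (m - L.length)
      rwa [Nat.add_sub_cancel' hm] at this
    rw [hc m, hr, actOf_ge L m hm, hqe]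
  · -- a finite violation witness inside the prefix
    simp only [List.any_eq_true, List.mem_range, Bool.or_eq_true] at hany
    obtain ⟨r2, -, r1, h12, hK⟩ := hany
    rcases hK with hK2 | hK4
    · simp only [K2, Bool.and_eq_true, Bool.or_eq_true, List.all_eq_true,
        List.mem_range, decide_eq_true_eq] at hK2
      obtain ⟨hsh, hbet⟩ := hK2
      refine not_induced_K2 π _ c r1 r2 h12 ?_ ?_
      · rw [hE r1, hE r2]; exact hsh
      · intro m hm1 hm2
        have hk : m - (r1 + 1) < r2 - r1 - 1 := by omega
        have := hbet _ hk
        rw [show r1 + 1 + (m - (r1 + 1)) = m by omega] at this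
        rw [hE m]; exact this
    · simp only [K4, Bool.and_eq_true, Bool.or_eq_true, decide_eq_true_eq] at hK4
      refine not_induced_K4 π _ c r1 r2 h12 ?_ ?_
      · rw [hE r1]; exact hK4.1
      · rw [hE r2]; exact hK4.2

/-- two-color impossibility. For every candidate two-color
protocol there is a fair semi-synchronous activation schedule, starting with
both lights X, whose induced P-execution schedule violates the RSYNCH
restricted-repetition condition. -/
theorem two_color_simulation_impossible (π : Proto) :
    ∃ act : ℕ → Bool × Bool, FairSched act ∧
      ∀ c : ℕ → C2 × C2, c 0 = (C2.X, C2.X) →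
        (∀ n, c (n + 1) = step π (act n) (c n)) →
        ¬ InducedRSynch π act c := by
  obtain ⟨L, -, hcert⟩ := List.any_eq_true.mp (coverage π)
  exact certify_sound π L hcert
end
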